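/- In an equivalence Kripke model M with world w and day d ∈ D, the following are equivalent: (ii) M|_{≥d}, w ⊨ ⟨T=d⟩ ∧ ¬□⟨T=d⟩; (iii) M, w ⊨ ⟨T=d⟩ ∧ ◇⟨T>d⟩; where M|_{≥d} denotes the submodel obtained by removing all r-worlds with r < d. -/
import Mathlib


/-- Propositional modal formulas over the variables `Y_r`, `r ∈ R = Fin 6`
(`0 = Mo, 1 = Tu, 2 = We, 3 = Th, 4 = Fr, 5 = none`). -/
inductive MForm : Type where
  | bot : MForm
  | var : Fin 6 → MForm
  | imp : MForm → MForm → MForm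
  | box : MForm → MForm
deriving DecidableEq

def MForm.neg (φ : MForm) : MForm := φ.imp .bot
def MForm.top : MForm := MForm.neg .bot
def MForm.or (φ ψ : MForm) : MForm := φ.neg.imp ψ
def MForm.and (φ ψ : MForm) : MForm := (φ.imp ψ.neg).neg
/-- `◇φ := ¬□¬φ`. -/
def MForm.dia (φ : MForm) : MForm := (φ.neg.box).neg

/-- A Kripke model with world set `W`: accessibility relation `E` and
valuation `val`. -/
structure Kripke (W : Type) where
  E : W → W → Prop
  val : W → Fin 6 → Prop

/-- Satisfaction `M, w ⊨ φ`. -/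
def MSat {W : Type} (M : Kripke W) : W → MForm → Prop
  | _, .bot => False
  | w, .var i => M.val w i
  | w, .imp φ ψ => MSat M w φ → MSat M w ψ
  | w, .box φ => ∀ w', M.E w w' → MSat M w' φ

def bigOrM (l : List MForm) : MForm := l.foldr MForm.or .bot

/-- `⟨T > d⟩ = ⋁_{r > d} Y_r`. -/
def TGtM (d : Fin 6) : MForm :=
  bigOrM (((List.finRange 6).filter (fun r => d < r)).map MForm.var)

/-- `σ := ⋁_{d ∈ D} (⟨T = d⟩ ∧ ◇⟨T > d⟩)`, the "surprising test" formula. -/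
def sigmaM : MForm :=
  bigOrM (((List.finRange 6).filter (fun d => d.val < 5)).map
    (fun d => (MForm.var d).and (MForm.dia (TGtM d))))

/-- The restriction `M|_{≥ d}` of `M` to worlds whose run is `≥ d`. -/
def restrict {W : Type} (M : Kripke W) (run : W → Fin 6) (d : Fin 6) :
    Kripke {w : W // d ≤ run w} where
  E := fun u v => M.E u.1 v.1
  val := fun u r => M.val u.1 r

lemma MSat_neg {W : Type} (M : Kripke W) (w : W) (φ : MForm) :
    MSat M w φ.neg ↔ ¬ MSat M w φ := Iff.rfl

lemma MSat_and {W : Type} (M : Kripke W) (w : W) (φ ψ : MForm) :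
    MSat M w (φ.and ψ) ↔ MSat M w φ ∧ MSat M w ψ := by
  simp only [MForm.and, MForm.neg, MSat]; tauto

lemma MSat_dia {W : Type} (M : Kripke W) (w : W) (φ : MForm) :
    MSat M w (φ.dia) ↔ ∃ w', M.E w w' ∧ MSat M w' φ := by
  simp only [MForm.dia, MForm.neg, MSat]
  constructor
  · intro h
    by_contra hn
    exact h (fun w' hE hs => hn ⟨w', hE, hs⟩) 
  · rintro ⟨w', hE, hs⟩ h
    exact h w' hE hs

lemma MSat_bigOrM {W : Type} (M : Kripke W) (w : W) (l : List MForm) :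
    MSat M w (bigOrM l) ↔ ∃ φ ∈ l, MSat M w φ := by
  induction l with
  | nil => simp [bigOrM, MSat]
  | cons a t ih =>
    simp only [bigOrM, List.foldr, MForm.or, MForm.neg, MSat] at ih ⊢
    constructor
    · intro h
      by_cases ha : MSat M w a
      · exact ⟨a, by simp, ha⟩
      · rcases ih.mp (h (fun h' => absurd h' ha)) with ⟨φ, hφ, hs⟩
        exact ⟨φ, by simp [hφ], hs⟩
    · rintro ⟨φ, hφ, hs⟩
      rcases List.mem_cons.mp hφ with rfl | hφ
      · intro h; exact absurd hs h
      · intro _; exact ih.mpr ⟨φ, hφ, hs⟩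

lemma MSat_TGtM {W : Type} (M : Kripke W) (run : W → Fin 6)
    (hrun : ∀ (w : W) (r : Fin 6), M.val w r ↔ run w = r) (w : W) (d : Fin 6) :
    MSat M w (TGtM d) ↔ d < run w := by
  rw [TGtM, MSat_bigOrM]
  constructor
  · rintro ⟨φ, hφ, hs⟩
    simp only [List.mem_map, List.mem_filter, List.mem_finRange, true_and,
      decide_eq_true_eq] at hφ
    rcases hφ with ⟨r, hr, rfl⟩
    have := (hrun w r).mp hs
    omega
  · intro h
    exact ⟨MForm.var (run w), by simp [List.mem_filter, h], (hrun w _).mpr rfl⟩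

/-- In an equivalence model `M` (each world `w` being a `run w`-world), for a
day `d` and a world `w` with `run w ≥ d`:
`M|_{≥d}, w ⊨ ⟨T=d⟩ ∧ ¬□⟨T=d⟩` iff `M, w ⊨ ⟨T=d⟩ ∧ ◇⟨T>d⟩`. -/
theorem stmt_17 {W : Type} (M : Kripke W) (hE : Equivalence M.E)
    (run : W → Fin 6) (hrun : ∀ (w : W) (r : Fin 6), M.val w r ↔ run w = r)
    (d : Fin 6) (hd : d.val < 5) (w : W) (hw : d ≤ run w) :
    MSat (restrict M run d) ⟨w, hw⟩
        ((MForm.var d).and (((MForm.var d).box).neg)) ↔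
      MSat M w ((MForm.var d).and (MForm.dia (TGtM d))) := by
  rw [MSat_and, MSat_and, MSat_neg, MSat_dia]
  have hvar : ∀ (u : {x : W // d ≤ run x}),
      MSat (restrict M run d) u (MForm.var d) ↔ M.val u.1 d :=
    fun u => Iff.rfl
  constructor
  · rintro ⟨h1, h2⟩
    refine ⟨h1, ?_⟩
    by_contra hn
    apply h2
    rintro ⟨w', hw'⟩ hE'
    show M.val w' d
    rw [hrun]
    by_contra hne
    have : d < run w' := lt_of_le_of_ne hw' (fun e => hne e.symm)
    exact hn ⟨w', hE', (MSat_TGtM M run hrun w' d).mpr this⟩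
  · rintro ⟨h1, w', hE', hs⟩
    have hgt : d < run w' := (MSat_TGtM M run hrun w' d).mp hs
    refine ⟨h1, fun hbox => ?_⟩
    have := (hvar _).mp (hbox ⟨w', le_of_lt hgt⟩ hE')
    rw [hrun] at this
    have h2 : run w' = d := this
    omega
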